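/- Let R be a Noetherian ring, a an ideal, and M an R-module. If Γ_a(M) is a-cofinite and Ext^i_R(R/a, M) is finitely generated for all i ≤ s, then Ext^i_R(R/a, M/Γ_a(M)) is finitely generated for all i ≤ s. -/

import Mathlib

open CategoryTheory Opposite Limits

universe u

noncomputable def lyMap {R : Type u} [CommRing R] (X : ChainComplex (ModuleCat.{u} R) ℕ)
    {A B : ModuleCat.{u} R} (f : A ⟶ B) :
    X.linearYonedaObj R A ⟶ X.linearYonedaObj R B where
  f i := ((linearYoneda R (ModuleCat.{u} R)).map f).app (op (X.X i))
  comm' i j hij := by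
    ext φ
    simp [ChainComplex.linearYonedaObj]
    exact (Category.assoc (X.d j i) (show X.X i ⟶ A from φ) f).symm

lemma lyMap_comp_eq_zero {R : Type u} [CommRing R] (X : ChainComplex (ModuleCat.{u} R) ℕ)
    (S : ShortComplex (ModuleCat.{u} R)) :
    lyMap X S.f ≫ lyMap X S.g = 0 := by
  ext i φ
  show _ = (0 : (X.linearYonedaObj R S.X₁).X i ⟶ (X.linearYonedaObj R S.X₃).X i) φ
  simp [lyMap, Category.assoc, S.zero]
  exact (Category.assoc (show X.X i ⟶ S.X₁ from φ) S.f S.g).trans (by rw [S.zero, Limits.comp_zero]; rfl)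

lemma ly_shortExact {R : Type u} [CommRing R] (X : ChainComplex (ModuleCat.{u} R) ℕ)
    [∀ n, Projective (X.X n)]
    {S : ShortComplex (ModuleCat.{u} R)} (hS : S.ShortExact) :
    (ShortComplex.mk (lyMap X S.f) (lyMap X S.g) (lyMap_comp_eq_zero X S)).ShortExact := by
  apply HomologicalComplex.shortExact_of_degreewise_shortExact
  intro n
  have hinj : Function.Injective S.f := hS.moduleCat_injective_f
  have hsurj : Function.Surjective S.g := hS.moduleCat_surjective_g
  haveI := hS.epi_g
  have hrk : LinearMap.range S.f.hom = LinearMap.ker S.g.hom := hS.exact.moduleCat_range_eq_ker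
  dsimp [ShortComplex.map, ShortComplex.mk, lyMap]
  refine { exact := ?_, mono_f := ?_, epi_g := ?_ }
  · rw [ShortComplex.moduleCat_exact_iff]
    show ∀ (φ : X.X n ⟶ S.X₂), Linear.rightComp R (X.X n) S.g φ = 0 →
      ∃ ψ : X.X n ⟶ S.X₁, Linear.rightComp R (X.X n) S.f ψ = φ
    intro φ hφ
    have hmem : ∀ p : X.X n, φ p ∈ LinearMap.range S.f.hom := by
      intro p
      rw [hrk, LinearMap.mem_ker]
      exact congrArg (fun (t : X.X n ⟶ S.X₃) => t p) hφ
    refine ⟨ModuleCat.ofHom ((LinearEquiv.ofInjective S.f.hom hinj).symm.toLinearMap ∘ₗ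
      LinearMap.codRestrict (LinearMap.range S.f.hom) φ.hom hmem), ?_⟩
    ext p
    show S.f ((LinearEquiv.ofInjective S.f.hom hinj).symm ⟨φ p, hmem p⟩) = φ p
    have h1 : S.f ((LinearEquiv.ofInjective S.f.hom hinj).symm ⟨φ p, hmem p⟩) =
        ((LinearEquiv.ofInjective S.f.hom hinj)
          ((LinearEquiv.ofInjective S.f.hom hinj).symm ⟨φ p, hmem p⟩) : S.X₂) :=
      (LinearEquiv.ofInjective_apply S.f.hom (h := hinj) _).symm
    rw [h1, LinearEquiv.apply_symm_apply]
  · rw [ModuleCat.mono_iff_injective]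
    show Function.Injective (Linear.rightComp R (X.X n) S.f)
    intro φ ψ h
    ext p
    apply hinj
    exact congrArg (fun (t : X.X n ⟶ S.X₂) => t p) h
  · rw [ModuleCat.epi_iff_surjective]
    show Function.Surjective (Linear.rightComp R (X.X n) S.g)
    intro φ
    exact ⟨Projective.factorThru φ S.g, Projective.factorThru_comp φ S.g⟩

lemma finite_of_sc_exact {R : Type u} [CommRing R] [IsNoetherianRing R]
    (S : ShortComplex (ModuleCat.{u} R)) (hS : S.Exact)
    (h1 : Module.Finite R S.X₁) (h3 : Module.Finite R S.X₃) : Module.Finite R S.X₂ := by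
  have hker : LinearMap.range S.f.hom = LinearMap.ker S.g.hom := hS.moduleCat_range_eq_ker
  rw [Module.finite_def]
  apply Submodule.fg_of_fg_map_of_fg_inf_ker S.g.hom
  · haveI : IsNoetherian R S.X₃ := isNoetherian_of_isNoetherianRing_of_finite R S.X₃
    exact IsNoetherian.noetherian _
  · rw [top_inf_eq, ← hker, ← Submodule.map_top]
    exact (Module.finite_def.mp h1).map S.f.hom

/-- The `i`-th Ext module `Ext^i_R(R/I, N)`. -/
noncomputable def extQ {R : Type u} [CommRing R] (I : Ideal R) (i : ℕ)
    (N : ModuleCat.{u} R) : ModuleCat.{u} R :=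
  ((Ext R (ModuleCat.{u} R) i).obj (op (ModuleCat.of R (R ⧸ I)))).obj N

/-- `N` is `I`-cofinite. -/
def IsCofinite {R : Type u} [CommRing R] (I : Ideal R) (N : ModuleCat.{u} R) : Prop :=
  Module.support R N ⊆ PrimeSpectrum.zeroLocus (I : Set R) ∧
    ∀ i : ℕ, Module.Finite R (extQ I i N)

/-- The `I`-torsion submodule `Γ_I(M)`. -/
noncomputable def gammaSub {R : Type u} [CommRing R] (I : Ideal R) (M : Type u)
    [AddCommGroup M] [Module R M] : Submodule R M :=
  ⨆ n : ℕ, Submodule.torsionBySet R M ((I ^ n : Ideal R) : Set R)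

/-- If `Γ_I(M)` is `I`-cofinite and `Ext^i_R(R/I, M)` is finite for all `i ≤ s`, then
`Ext^i_R(R/I, M/Γ_I(M))` is finite for all `i ≤ s`. -/
theorem stmt14 {R : Type u} [CommRing R] [IsNoetherianRing R] (I : Ideal R) (s : ℕ)
    (M : Type u) [AddCommGroup M] [Module R M]
    (hcof : IsCofinite I (ModuleCat.of R (gammaSub I M)))
    (hext : ∀ i ≤ s, Module.Finite R (extQ I i (ModuleCat.of R M))) :
    ∀ i ≤ s, Module.Finite R (extQ I i (ModuleCat.of R (M ⧸ gammaSub I M))) := by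
  intro n hn
  let Γ : Submodule R M := gammaSub I M
  let S₀ : ShortComplex (ModuleCat.{u} R) := ShortComplex.mk
    (ModuleCat.ofHom Γ.subtype) (ModuleCat.ofHom Γ.mkQ)
    (by ext x; exact (Submodule.Quotient.mk_eq_zero _).mpr x.2)
  have hS₀ : S₀.ShortExact := by
    refine { exact := ?_, mono_f := ?_, epi_g := ?_ }
    · rw [ShortComplex.moduleCat_exact_iff_range_eq_ker]
      show LinearMap.range Γ.subtype = LinearMap.ker Γ.mkQ
      rw [Submodule.range_subtype, Submodule.ker_mkQ]
    · rw [ModuleCat.mono_iff_injective]; exact Subtype.val_injective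
    · rw [ModuleCat.epi_iff_surjective]; exact Submodule.mkQ_surjective Γ
  let P : ProjectiveResolution (ModuleCat.of R (R ⧸ I)) :=
    (HasProjectiveResolution.out (Z := ModuleCat.of R (R ⧸ I))).some
  let T : ShortComplex (CochainComplex (ModuleCat.{u} R) ℕ) := ShortComplex.mk
    (lyMap P.complex S₀.f) (lyMap P.complex S₀.g) (lyMap_comp_eq_zero P.complex S₀)
  have hT : T.ShortExact := ly_shortExact P.complex hS₀
  have hseq := hT.homology_exact₃ n (n + 1) (by simp)
  have h1 : Module.Finite R (T.X₂.homology n) := by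
    have h := hext n hn
    unfold extQ at h
    exact Module.Finite.equiv (P.isoExt n (ModuleCat.of R M)).toLinearEquiv
  have h3 : Module.Finite R (T.X₁.homology (n + 1)) := by
    have h := hcof.2 (n + 1)
    unfold extQ at h
    exact Module.Finite.equiv (P.isoExt (n + 1) (ModuleCat.of R (gammaSub I M))).toLinearEquiv
  have h2 : Module.Finite R (T.X₃.homology n) := finite_of_sc_exact _ hseq h1 h3
  unfold extQ
  exact Module.Finite.equiv (P.isoExt n (ModuleCat.of R (M ⧸ gammaSub I M))).symm.toLinearEquiv
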